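/- Let η > 0, T > 0 and f_in ∈ L¹(ℝ⁺) with f_in ≥ 0 a.e. If f₁, f₂ ∈ L¹([0,T]×ℝ⁺) are two very weak solutions of the nonlocal diffusion problem ∂_t f = (η/3)·(∫_0^∞ f(t,x_*) dx_*)·∂²_x f with initial datum f_in, then their masses agree: ∫_0^∞ f₁(t,x) dx = ∫_0^∞ f₂(t,x) dx for a.e. t ∈ [0,T]. -/

import Mathlib

open MeasureTheory Set Filter

/-!
Testing against functions of time alone removes the nonlocal diffusion term and leaves the weak
form of `M' = 0, M(0) = ∫ fin` for the mass `M(t) = ∫₀^∞ f(t,x) dx`. With `ψ(t) = ∫_T^t g` for a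
smooth compactly supported `g`, this reads `∫₀^T g M = (∫₀^T g)(∫ fin)`, so by the fundamental lemma
of the calculus of variations every very weak solution has mass `∫ fin` at almost every time.
-/

/-- A very weak solution of the nonlocal diffusion problem
`∂ₜ g = (η/3)(∫₀^∞ g(t,x_*) dx_*) ∂ₓ² g` on `[0,T] × ℝ⁺` with initial datum `fin`. -/
def IsVeryWeakSol (η T : ℝ) (fin : ℝ → ℝ) (g : ℝ → ℝ → ℝ) : Prop :=
  Integrable (fun p : ℝ × ℝ => g p.1 p.2)
    ((volume.restrict (Icc (0:ℝ) T)).prod (volume.restrict (Ici (0:ℝ)))) ∧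
  ∀ φ : ℝ → ℝ → ℝ,
    (∀ x : ℝ, ContDiff ℝ 1 (fun t => φ t x)) →
    (∀ t : ℝ, ContDiff ℝ 2 (fun x => φ t x)) →
    (∃ C : ℝ, ∀ t x : ℝ, |φ t x| ≤ C) →
    (∀ x : ℝ, φ T x = 0) →
    (∫ t in (0:ℝ)..T, ∫ x in Ici (0:ℝ), g t x * deriv (fun s => φ s x) t)
      + η / 3 * (∫ t in (0:ℝ)..T,
          (∫ y in Ici (0:ℝ), g t y) *
            ∫ x in Ici (0:ℝ), g t x * iteratedDeriv 2 (fun y => φ t y) x)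
      + (∫ x in Ici (0:ℝ), fin x * φ 0 x) = 0

theorem norm_intervalIntegral_le_integral_norm {E : Type*} [NormedAddCommGroup E]
    [NormedSpace ℝ E] {g : ℝ → E} (hg : Integrable g) (a b : ℝ) :
    ‖∫ s in a..b, g s‖ ≤ ∫ s, ‖g s‖ :=
  calc ‖∫ s in a..b, g s‖ ≤ ∫ s in uIoc a b, ‖g s‖ :=
        intervalIntegral.norm_integral_le_integral_norm_uIoc
    _ ≤ ∫ s, ‖g s‖ := setIntegral_le_integral hg.norm (.of_forall fun _ => norm_nonneg _)

noncomputable def mass (f : ℝ → ℝ → ℝ) (t : ℝ) : ℝ := ∫ x in Ici (0:ℝ), f t x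

namespace IsVeryWeakSol

variable {η T : ℝ} {fin : ℝ → ℝ} {f : ℝ → ℝ → ℝ}

theorem integrableOn_mass (hf : IsVeryWeakSol η T fin f) :
    IntegrableOn (mass f) (Icc 0 T) :=
  hf.1.integral_prod_left

theorem intervalIntegral_mass_mul_deriv (hf : IsVeryWeakSol η T fin f) {ψ : ℝ → ℝ}
    (hψ : ContDiff ℝ 1 ψ) (hψ_bdd : ∃ C, ∀ t, |ψ t| ≤ C) (hψT : ψ T = 0) :
    (∫ t in (0:ℝ)..T, mass f t * deriv ψ t) + (∫ x in Ici (0:ℝ), fin x) * ψ 0 = 0 := by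
  obtain ⟨C, hC⟩ := hψ_bdd
  have h := hf.2 (fun t _ => ψ t) (fun _ => hψ) (fun _ => contDiff_const) ⟨C, fun t _ => hC t⟩
    (fun _ => hψT)
  have hψ'' : ∀ t, iteratedDeriv 2 (fun _ : ℝ => ψ t) = 0 := fun t => by
    ext; simp [iteratedDeriv_succ]
  simpa only [hψ'', Pi.zero_apply, mul_zero, integral_zero, intervalIntegral.integral_zero,
    integral_mul_const, add_zero, mass] using h

theorem setIntegral_mul_mass (hf : IsVeryWeakSol η T fin f) (hT : 0 ≤ T) {g : ℝ → ℝ}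
    (hg : Continuous g) (hg_int : Integrable g) :
    ∫ t in Ioc 0 T, g t * mass f t = (∫ t in Ioc 0 T, g t) * ∫ x in Ici (0:ℝ), fin x := by
  set ψ : ℝ → ℝ := fun t => ∫ s in T..t, g s
  have hψ' : deriv ψ = g := funext (hg.deriv_integral g T)
  have hψ : ContDiff ℝ 1 ψ := contDiff_one_iff_deriv.2
    ⟨fun t => (hg.integral_hasStrictDerivAt T t).hasDerivAt.differentiableAt, hψ' ▸ hg⟩
  have h := hf.intervalIntegral_mass_mul_deriv hψ
    ⟨_, fun t => norm_intervalIntegral_le_integral_norm hg_int T t⟩ intervalIntegral.integral_same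
  have hψ0 : ψ 0 = -∫ t in Ioc 0 T, g t := by
    simp only [ψ]
    rw [intervalIntegral.integral_symm, intervalIntegral.integral_of_le hT]
  rw [hψ', hψ0, intervalIntegral.integral_of_le hT] at h
  simp_rw [mul_comm (g _)]
  linarith

theorem ae_mass_eq_integral_initial (hf : IsVeryWeakSol η T fin f) (hT : 0 ≤ T) :
    ∀ᵐ t ∂(volume.restrict (Icc 0 T)), mass f t = ∫ x in Ici (0:ℝ), fin x := by
  rw [Measure.restrict_congr_set Ioc_ae_eq_Icc.symm]
  refine ae_eq_of_integral_contDiff_smul_eq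
    (hf.integrableOn_mass.mono_set Ioc_subset_Icc_self).locallyIntegrable
    (locallyIntegrable_const _) fun g hg hg_supp => ?_
  simp only [smul_eq_mul, integral_mul_const]
  exact hf.setIntegral_mul_mass hT hg.continuous
    (hg.continuous.integrable_of_hasCompactSupport hg_supp)

end IsVeryWeakSol

theorem stmt_18_general (η T : ℝ) (hT : 0 < T)
    (fin : ℝ → ℝ)
    (f₁ f₂ : ℝ → ℝ → ℝ)
    (hf₁ : IsVeryWeakSol η T fin f₁) (hf₂ : IsVeryWeakSol η T fin f₂) :
    ∀ᵐ t ∂(volume.restrict (Icc (0:ℝ) T)),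
      ∫ x in Ici (0:ℝ), f₁ t x = ∫ x in Ici (0:ℝ), f₂ t x := by
  filter_upwards [hf₁.ae_mass_eq_integral_initial hT.le, hf₂.ae_mass_eq_integral_initial hT.le]
    with t h₁ h₂
  exact h₁.trans h₂.symm

/-- any two very weak solutions of the nonlocal diffusion problem with
the same initial datum have the same mass for a.e. `t ∈ [0,T]`. -/
theorem stmt_18 (η T : ℝ) (hη : 0 < η) (hT : 0 < T)
    (fin : ℝ → ℝ) (hfin : IntegrableOn fin (Ici (0:ℝ)) volume)
    (hfin_pos : ∀ᵐ x ∂(volume.restrict (Ici (0:ℝ))), 0 ≤ fin x)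
    (f₁ f₂ : ℝ → ℝ → ℝ)
    (hf₁ : IsVeryWeakSol η T fin f₁) (hf₂ : IsVeryWeakSol η T fin f₂) :
    ∀ᵐ t ∂(volume.restrict (Icc (0:ℝ) T)),
      ∫ x in Ici (0:ℝ), f₁ t x = ∫ x in Ici (0:ℝ), f₂ t x :=
  stmt_18_general η T hT fin f₁ f₂ hf₁ hf₂
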